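/- arXiv:2202.08688 — 2 statements merged into one kernel-verified Lean document; each statement's English description precedes it below -/
import Mathlib

section
/- Let q be a prime power, ℓ<k, and let S⊆V(F_q^k,ℓ) be nonempty. Let S↑ denote the set of (ℓ+1)-flats of F_q^k that contain at least one member of S, with μ(S↑) its fraction among all (ℓ+1)-flats. Then μ(S↑) ≥ μ(S)/(1−Φ(S)); here 1−Φ(S)>0 since the affine Grassmann walk remains at the same flat with positive probability. -/
open scoped Classical

/-- `A` is a `t`-flat: a nonempty affine subspace whose direction has dimension `t`. -/
def IsFlat (F : Type) [Field F] {n : ℕ} (t : ℕ) (A : AffineSubspace F (Fin n → F)) : Prop :=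
  (A : Set (Fin n → F)).Nonempty ∧ Module.finrank F A.direction = t
/-- `μ(S)`: fraction of `ℓ`-flats of `F^k` that lie in `S`. -/
noncomputable def mu (F : Type) [Field F] (k ℓ : ℕ) (S : Set (AffineSubspace F (Fin k → F))) : ℝ :=
  (Nat.card {A : AffineSubspace F (Fin k → F) // IsFlat F ℓ A ∧ A ∈ S} : ℝ) /
  (Nat.card {A : AffineSubspace F (Fin k → F) // IsFlat F ℓ A} : ℝ)

/-- `μ(S_x)`: fraction of `ℓ`-flats containing `x` that lie in `S`. -/
noncomputable def muIn (F : Type) [Field F] (k ℓ : ℕ) (S : Set (AffineSubspace F (Fin k → F)))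
    (x : Fin k → F) : ℝ :=
  (Nat.card {A : AffineSubspace F (Fin k → F) // IsFlat F ℓ A ∧ x ∈ A ∧ A ∈ S} : ℝ) /
  (Nat.card {A : AffineSubspace F (Fin k → F) // IsFlat F ℓ A ∧ x ∈ A} : ℝ)

/-- `μ(S_{y,lin})`: fraction of `ℓ`-flats whose linear part contains `y` that lie in `S`. -/
noncomputable def muInLin (F : Type) [Field F] (k ℓ : ℕ) (S : Set (AffineSubspace F (Fin k → F)))
    (y : Fin k → F) : ℝ :=
  (Nat.card {A : AffineSubspace F (Fin k → F) // IsFlat F ℓ A ∧ y ∈ A.direction ∧ A ∈ S} : ℝ) /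
  (Nat.card {A : AffineSubspace F (Fin k → F) // IsFlat F ℓ A ∧ y ∈ A.direction} : ℝ)

/-- `μ(S_W)`: fraction of `ℓ`-flats contained in `W` that lie in `S`. -/
noncomputable def muOut (F : Type) [Field F] (k ℓ : ℕ) (S : Set (AffineSubspace F (Fin k → F)))
    (W : AffineSubspace F (Fin k → F)) : ℝ :=
  (Nat.card {A : AffineSubspace F (Fin k → F) // IsFlat F ℓ A ∧ A ≤ W ∧ A ∈ S} : ℝ) /
  (Nat.card {A : AffineSubspace F (Fin k → F) // IsFlat F ℓ A ∧ A ≤ W} : ℝ)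

/-- translate a flat by a vector. -/
noncomputable def translateFlat (F : Type) [Field F] {k : ℕ} (x : Fin k → F)
    (A : AffineSubspace F (Fin k → F)) : AffineSubspace F (Fin k → F) :=
  A.map (AffineEquiv.constVAdd F (Fin k → F) x).toAffineMap

/-- `μ(S_{W,lin})` for a linear hyperplane `W`: probability that `x + A ∈ S` for a uniformly
random `ℓ`-flat `A ⊆ W` and a uniformly random `x ∉ W`. -/
noncomputable def muOutLin (F : Type) [Field F] (k ℓ : ℕ) (S : Set (AffineSubspace F (Fin k → F)))
    (W : Submodule F (Fin k → F)) : ℝ :=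
  (Nat.card {P : AffineSubspace F (Fin k → F) × (Fin k → F) //
      IsFlat F ℓ P.1 ∧ (P.1 : Set (Fin k → F)) ⊆ (W : Set (Fin k → F)) ∧ P.2 ∉ W ∧
      translateFlat F P.2 P.1 ∈ S} : ℝ) /
  (Nat.card {P : AffineSubspace F (Fin k → F) × (Fin k → F) //
      IsFlat F ℓ P.1 ∧ (P.1 : Set (Fin k → F)) ⊆ (W : Set (Fin k → F)) ∧ P.2 ∉ W} : ℝ)

/-- Triples `(A, B, A')` of the affine Grassmann walk: `A, A'` are `ℓ`-flats, `B` an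
`(ℓ+1)`-flat, with `A ⊆ B` and `A' ⊆ B`. -/
def walkTriple (F : Type) [Field F] (k ℓ : ℕ)
    (T : AffineSubspace F (Fin k → F) × AffineSubspace F (Fin k → F) ×
      AffineSubspace F (Fin k → F)) : Prop :=
  IsFlat F ℓ T.1 ∧ IsFlat F (ℓ + 1) T.2.1 ∧ IsFlat F ℓ T.2.2 ∧ T.1 ≤ T.2.1 ∧ T.2.2 ≤ T.2.1

/-- `1 − Φ(S)`: the probability that one step of the affine Grassmann walk started from a
uniform element of `S` stays in `S`. -/
noncomputable def stayProb (F : Type) [Field F] (k ℓ : ℕ)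
    (S : Set (AffineSubspace F (Fin k → F))) : ℝ :=
  (Nat.card {T : AffineSubspace F (Fin k → F) × AffineSubspace F (Fin k → F) ×
      AffineSubspace F (Fin k → F) // walkTriple F k ℓ T ∧ T.1 ∈ S ∧ T.2.2 ∈ S} : ℝ) /
  (Nat.card {T : AffineSubspace F (Fin k → F) × AffineSubspace F (Fin k → F) ×
      AffineSubspace F (Fin k → F) // walkTriple F k ℓ T ∧ T.1 ∈ S} : ℝ)

/-- The upper shadow of `S`: `(ℓ+1)`-flats containing a member of `S`. -/
def upShadow (F : Type) [Field F] (k ℓ : ℕ) (S : Set (AffineSubspace F (Fin k → F))) :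
    Set (AffineSubspace F (Fin k → F)) :=
  {B | IsFlat F (ℓ + 1) B ∧ ∃ A ∈ S, A ≤ B}

/-- pseudo-randomness with respect to zoom-ins. -/
def prZoomIn (F : Type) [Field F] (k ℓ : ℕ) (S : Set (AffineSubspace F (Fin k → F)))
    (ξ : ℝ) : Prop :=
  ∀ x : Fin k → F, muIn F k ℓ S x ≤ ξ

/-- pseudo-randomness with respect to zoom-ins on the linear part. -/
def prZoomInLin (F : Type) [Field F] (k ℓ : ℕ) (S : Set (AffineSubspace F (Fin k → F)))
    (ξ : ℝ) : Prop :=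
  ∀ y : Fin k → F, y ≠ 0 → muInLin F k ℓ S y ≤ ξ

/-- pseudo-randomness with respect to zoom-outs (affine hyperplanes). -/
def prZoomOut (F : Type) [Field F] (k ℓ : ℕ) (S : Set (AffineSubspace F (Fin k → F)))
    (ξ : ℝ) : Prop :=
  ∀ W : AffineSubspace F (Fin k → F), IsFlat F (k - 1) W → muOut F k ℓ S W ≤ ξ

/-- pseudo-randomness with respect to zoom-outs on the linear part (linear hyperplanes). -/
def prZoomOutLin (F : Type) [Field F] (k ℓ : ℕ) (S : Set (AffineSubspace F (Fin k → F)))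
    (ξ : ℝ) : Prop :=
  ∀ W : Submodule F (Fin k → F), Module.finrank F W = k - 1 → muOutLin F k ℓ S W ≤ ξ

/-!
Let `D` (resp. `d`) be the number of `(ℓ+1)`-flats containing an `ℓ`-flat (resp. of `ℓ`-flats
contained in an `(ℓ+1)`-flat); both are constant because the affine group acts transitively on
flats of each dimension. For an `(ℓ+1)`-flat `B` let `deg B` be the number of members of `S`
inside `B`. Walks `A ⊆ B ⊇ A'` starting in `S` number `|S| D d`, those also ending in `S` number
`∑ deg B ^ 2`, and `∑ deg B = |S| D`. Since `deg` is supported on `S↑`, Cauchy–Schwarz gives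
`(|S| D)² ≤ |S↑| ∑ deg B ^ 2`, and the double count `#ℓ-flats · D = #(ℓ+1)-flats · d` turns this
into the claim.
-/

open Finset Module

namespace Finset

variable {α β : Type*}

theorem card_bipartiteAbove_orderIso_apply [Preorder α] (φ : α ≃o α) {t : Finset α}
    (ht : ∀ b, φ b ∈ t ↔ b ∈ t) (a : α) :
    #(t.bipartiteAbove (· ≤ ·) (φ a)) = #(t.bipartiteAbove (· ≤ ·) a) :=
  (card_equiv φ.toEquiv fun b => by simp [ht]).symm

theorem card_bipartiteBelow_orderIso_apply [Preorder α] (φ : α ≃o α) {t : Finset α}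
    (ht : ∀ b, φ b ∈ t ↔ b ∈ t) (a : α) :
    #(t.bipartiteBelow (· ≤ ·) (φ a)) = #(t.bipartiteBelow (· ≤ ·) a) :=
  (card_equiv φ.toEquiv fun b => by simp [ht]).symm

noncomputable def bipartiteWalks (r : α → β → Prop) (S₁ : Finset α) (t : Finset β)
    (S₂ : Finset α) : Finset (α × β × α) :=
  (S₁ ×ˢ t ×ˢ S₂).filter fun x => r x.1 x.2.1 ∧ r x.2.2 x.2.1

@[simp]
theorem mem_bipartiteWalks {r : α → β → Prop} {S₁ S₂ : Finset α} {t : Finset β}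
    {x : α × β × α} :
    x ∈ bipartiteWalks r S₁ t S₂ ↔
      x.1 ∈ S₁ ∧ x.2.1 ∈ t ∧ x.2.2 ∈ S₂ ∧ r x.1 x.2.1 ∧ r x.2.2 x.2.1 := by
  simp [bipartiteWalks, and_assoc]

theorem card_bipartiteWalks (r : α → β → Prop) (S₁ : Finset α) (t : Finset β) (S₂ : Finset α) :
    #(bipartiteWalks r S₁ t S₂) =
      ∑ b ∈ t, #(S₁.bipartiteBelow r b) * #(S₂.bipartiteBelow r b) := by
  rw [card_eq_sum_card_fiberwise (f := fun x => x.2.1) (t := t)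
    fun x hx => (mem_bipartiteWalks.1 hx).2.1]
  refine sum_congr rfl fun b _ => ?_
  rw [← card_product]
  refine card_nbij' (fun x => (x.1, x.2.2)) (fun p => (p.1, b, p.2)) ?_ ?_ ?_ fun _ _ => rfl
  · intro x hx
    simp only [coe_filter, mem_bipartiteWalks, Set.mem_ofPred_eq] at hx
    simp only [coe_product, coe_bipartiteBelow, Set.mem_prod, Set.mem_ofPred_eq]
    grind
  · intro p hp
    simp only [coe_product, coe_bipartiteBelow, Set.mem_prod, Set.mem_ofPred_eq] at hp
    simp only [coe_filter, mem_bipartiteWalks, Set.mem_ofPred_eq]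
    grind
  · intro x hx
    simp only [coe_filter, Set.mem_ofPred_eq] at hx
    simp [← hx.2]

theorem sq_sum_le_card_filter_ne_zero_mul_sum_sq {ι : Type*} (s : Finset ι) (f : ι → ℕ) :
    (∑ i ∈ s, f i) ^ 2 ≤ #(s.filter (f · ≠ 0)) * ∑ i ∈ s, f i ^ 2 := by
  have hsq : ∑ i ∈ s.filter (f · ≠ 0), f i ^ 2 = ∑ i ∈ s, f i ^ 2 :=
    sum_filter_of_ne fun i _ h => by simpa using h
  rw [← sum_filter_ne_zero, ← hsq]
  exact sq_sum_le_card_mul_sum_sq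

theorem card_mul_card_bipartiteWalks_mul_le (r : α → β → Prop) {s S : Finset α} {t : Finset β}
    {D d : ℕ} (hS : S ⊆ s) (hD : ∀ a ∈ s, #(t.bipartiteAbove r a) = D)
    (hd : ∀ b ∈ t, #(s.bipartiteBelow r b) = d) :
    #S * #(bipartiteWalks r S t s) * #t ≤
      #(t.filter fun b => ∃ a ∈ S, r a b) * (#s * #(bipartiteWalks r S t S)) := by
  set deg := fun b => #(S.bipartiteBelow r b)
  have hsum : ∑ b ∈ t, deg b = #S * D := by
    rw [← sum_card_bipartiteAbove_eq_sum_card_bipartiteBelow,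
      sum_const_nat fun a ha => hD a (hS ha)]
  have hstart : #(bipartiteWalks r S t s) = #S * D * d := by
    rw [card_bipartiteWalks, sum_congr rfl fun b hb => by rw [hd b hb], ← sum_mul, ← hsum]
  have hstay : #(bipartiteWalks r S t S) = ∑ b ∈ t, deg b ^ 2 := by
    simp only [card_bipartiteWalks, sq, deg]
  have hsupp : t.filter (deg · ≠ 0) = t.filter fun b => ∃ a ∈ S, r a b := by
    ext b
    simp [deg, ← nonempty_iff_ne_empty, Finset.Nonempty]
  have hCS := sq_sum_le_card_filter_ne_zero_mul_sum_sq t deg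
  rw [hsum, hsupp, ← hstay] at hCS
  have hreg : #s * D = #t * d := card_mul_eq_card_mul r hD hd
  calc #S * #(bipartiteWalks r S t s) * #t = #s * (#S * D) ^ 2 := by
        rw [hstart, sq, mul_mul_mul_comm, ← mul_assoc, mul_assoc _ d, mul_comm d, ← hreg]
        ring
    _ ≤ #s * (#(t.filter fun b => ∃ a ∈ S, r a b) * #(bipartiteWalks r S t S)) :=
        Nat.mul_le_mul_left _ hCS
    _ = _ := by ring

end Finset

theorem Submodule.exists_linearEquiv_map_eq_of_finrank_eq {K V : Type*} [DivisionRing K]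
    [AddCommGroup V] [Module K V] [FiniteDimensional K V] {U U' : Submodule K V}
    (h : finrank K U = finrank K U') : ∃ e : V ≃ₗ[K] V, U.map (e : V →ₗ[K] V) = U' := by
  obtain ⟨C, hC⟩ := U.exists_isCompl
  obtain ⟨C', hC'⟩ := U'.exists_isCompl
  have hCC' : finrank K C = finrank K C' := by
    have := finrank_add_eq_of_isCompl hC
    have := finrank_add_eq_of_isCompl hC'
    omega
  let e := (prodEquivOfIsCompl U C hC).symm ≪≫ₗ
    ((LinearEquiv.ofFinrankEq _ _ h).prodCongr (LinearEquiv.ofFinrankEq _ _ hCC')) ≪≫ₗ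
    prodEquivOfIsCompl U' C' hC'
  refine ⟨e, eq_of_le_of_finrank_le ?_ (by rw [LinearEquiv.finrank_map_eq, h])⟩
  rintro _ ⟨u, hu, rfl⟩
  have hu' : (prodEquivOfIsCompl U C hC).symm u = ((⟨u, hu⟩ : U), 0) :=
    prodEquivOfIsCompl_symm_apply_left U C hC ⟨u, hu⟩
  simp [e, hu']

namespace AffineSubspace

section Ring

variable {k V P : Type*} [Ring k] [AddCommGroup V] [Module k V] [AddTorsor V P]

instance [Finite P] : Finite (AffineSubspace k P) :=
  Finite.of_injective _ SetLike.coe_injective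

def orderIsoMapComap (e : P ≃ᵃ[k] P) : AffineSubspace k P ≃o AffineSubspace k P where
  toFun := map e
  invFun := comap e
  left_inv := comap_map_eq_of_injective e.injective
  right_inv s := coe_injective <| Set.image_preimage_eq _ e.surjective
  map_rel_iff' {s t} := by
    rw [Equiv.coe_fn_mk, map_le_iff_le_comap, comap_map_eq_of_injective e.injective]

@[simp]
theorem orderIsoMapComap_apply (e : P ≃ᵃ[k] P) (s : AffineSubspace k P) :
    orderIsoMapComap e s = s.map e :=
  rfl

end Ring

variable {K V P : Type*} [DivisionRing K] [AddCommGroup V] [Module K V] [FiniteDimensional K V]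
  [AddTorsor V P]

theorem exists_affineEquiv_map_eq_of_finrank_eq {A A' : AffineSubspace K P}
    (hA : (A : Set P).Nonempty) (hA' : (A' : Set P).Nonempty)
    (h : finrank K A.direction = finrank K A'.direction) :
    ∃ e : P ≃ᵃ[K] P, A.map e.toAffineMap = A' := by
  obtain ⟨a, ha⟩ := hA
  obtain ⟨a', ha'⟩ := hA'
  obtain ⟨e, he⟩ := Submodule.exists_linearEquiv_map_eq_of_finrank_eq h
  refine ⟨(AffineEquiv.vaddConst K a).symm.trans
    (e.toAffineEquiv.trans (AffineEquiv.vaddConst K a')), ?_⟩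
  rw [← mk'_eq ha, ← mk'_eq ha', map_mk']
  simp [← he]
  rfl

theorem exists_le_finrank_direction_eq_succ {A : AffineSubspace K P} (hA : (A : Set P).Nonempty)
    (h : finrank K A.direction < finrank K V) :
    ∃ B : AffineSubspace K P, A ≤ B ∧ finrank K B.direction = finrank K A.direction + 1 := by
  obtain ⟨a, ha⟩ := hA
  obtain ⟨v, -, hv⟩ := SetLike.exists_of_lt (Submodule.lt_top_of_finrank_lt_finrank h)
  refine ⟨mk' a (A.direction ⊔ Submodule.span K {v}), ?_, ?_⟩
  · rw [← mk'_eq ha, mk'_le_mk'_iff, mk'_eq ha]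
    exact le_sup_left
  · rw [direction_mk', Submodule.finrank_sup_span_singleton hv]

end AffineSubspace

section Flats

variable {F : Type} [Field F] {k : ℕ}

theorem isFlat_map_iff {t : ℕ} (e : (Fin k → F) ≃ᵃ[F] (Fin k → F))
    {A : AffineSubspace F (Fin k → F)} : IsFlat F t (A.map e.toAffineMap) ↔ IsFlat F t A := by
  rw [IsFlat, IsFlat, AffineSubspace.coe_map, Set.image_nonempty, AffineSubspace.map_direction,
    AffineEquiv.linear_toAffineMap, LinearEquiv.finrank_map_eq]

theorem IsFlat.exists_affineEquiv_map_eq {t : ℕ} {A A' : AffineSubspace F (Fin k → F)}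
    (hA : IsFlat F t A) (hA' : IsFlat F t A') :
    ∃ e : (Fin k → F) ≃ᵃ[F] (Fin k → F), A.map e.toAffineMap = A' :=
  AffineSubspace.exists_affineEquiv_map_eq_of_finrank_eq hA.1 hA'.1 (hA.2.trans hA'.2.symm)

theorem IsFlat.exists_isFlat_succ_ge {ℓ : ℕ} {A : AffineSubspace F (Fin k → F)}
    (hA : IsFlat F ℓ A) (hℓk : ℓ < k) : ∃ B, IsFlat F (ℓ + 1) B ∧ A ≤ B := by
  obtain ⟨B, hAB, hB⟩ := AffineSubspace.exists_le_finrank_direction_eq_succ hA.1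
    (by rwa [hA.2, finrank_fin_fun])
  exact ⟨B, ⟨hA.1.mono hAB, by rw [hB, hA.2]⟩, hAB⟩

variable [Finite F]

variable (F k) in
noncomputable def flats (t : ℕ) : Finset (AffineSubspace F (Fin k → F)) :=
  (Set.toFinite {A | IsFlat F t A}).toFinset

@[simp]
theorem mem_flats {t : ℕ} {A : AffineSubspace F (Fin k → F)} : A ∈ flats F k t ↔ IsFlat F t A :=
  Set.Finite.mem_toFinset _

theorem orderIsoMapComap_mem_flats_iff {t : ℕ} (e : (Fin k → F) ≃ᵃ[F] (Fin k → F))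
    (B : AffineSubspace F (Fin k → F)) :
    AffineSubspace.orderIsoMapComap e B ∈ flats F k t ↔ B ∈ flats F k t := by
  simp [isFlat_map_iff]

theorem card_flats_above_eq {t t' : ℕ} {A A' : AffineSubspace F (Fin k → F)}
    (hA : IsFlat F t A) (hA' : IsFlat F t A') :
    #((flats F k t').bipartiteAbove (· ≤ ·) A) = #((flats F k t').bipartiteAbove (· ≤ ·) A') := by
  obtain ⟨e, rfl⟩ := hA.exists_affineEquiv_map_eq hA'
  exact (card_bipartiteAbove_orderIso_apply _ (orderIsoMapComap_mem_flats_iff e) A).symm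

theorem card_flats_below_eq {t t' : ℕ} {A A' : AffineSubspace F (Fin k → F)}
    (hA : IsFlat F t A) (hA' : IsFlat F t A') :
    #((flats F k t').bipartiteBelow (· ≤ ·) A) = #((flats F k t').bipartiteBelow (· ≤ ·) A') := by
  obtain ⟨e, rfl⟩ := hA.exists_affineEquiv_map_eq hA'
  exact (card_bipartiteBelow_orderIso_apply _ (orderIsoMapComap_mem_flats_iff e) A).symm

end Flats

section Measures

variable {F : Type} [Field F] [Finite F] {k ℓ : ℕ} (S : Set (AffineSubspace F (Fin k → F)))

theorem mu_eq_card_div (t : ℕ) :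
    mu F k t S = #((flats F k t).filter (· ∈ S)) / #(flats F k t) := by
  rw [mu]
  congr 2 <;> exact Nat.subtype_card _ fun A => by simp

theorem mu_upShadow_eq_card_div (hS : ∀ A ∈ S, IsFlat F ℓ A) :
    mu F k (ℓ + 1) (upShadow F k ℓ S) =
      #((flats F k (ℓ + 1)).filter fun B => ∃ A ∈ (flats F k ℓ).filter (· ∈ S), A ≤ B) /
        #(flats F k (ℓ + 1)) := by
  rw [mu_eq_card_div]
  congr 3
  refine filter_congr fun B hB => ?_
  simp only [_root_.upShadow, Set.mem_ofPred_eq, mem_filter, mem_flats] at hB ⊢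
  grind

theorem stayProb_eq_card_div :
    stayProb F k ℓ S =
      #(bipartiteWalks (· ≤ ·) ((flats F k ℓ).filter (· ∈ S)) (flats F k (ℓ + 1))
          ((flats F k ℓ).filter (· ∈ S))) /
        #(bipartiteWalks (· ≤ ·) ((flats F k ℓ).filter (· ∈ S)) (flats F k (ℓ + 1))
          (flats F k ℓ)) := by
  rw [stayProb]
  congr 2 <;> exact Nat.subtype_card _ fun T => by simp [walkTriple]; tauto

end Measures

theorem shadow_lower_bound_general
    (F : Type) [Field F] [Fintype F]
    (k ℓ : ℕ) (hlk : ℓ < k)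
    (S : Set (AffineSubspace F (Fin k → F)))
    (hSsub : ∀ A ∈ S, IsFlat F ℓ A) (hSne : S.Nonempty) :
    0 < stayProb F k ℓ S ∧
      mu F k (ℓ + 1) (upShadow F k ℓ S) ≥ mu F k ℓ S / stayProb F k ℓ S := by
  obtain ⟨A₀, hA₀S⟩ := hSne
  have hA₀ := hSsub A₀ hA₀S
  obtain ⟨B₀, hB₀, hA₀B₀⟩ := hA₀.exists_isFlat_succ_ge hlk
  set S' := (flats F k ℓ).filter (· ∈ S)
  have hwalk (s : Finset _) (hA₀s : A₀ ∈ s) :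
      0 < #(bipartiteWalks (· ≤ ·) S' (flats F k (ℓ + 1)) s) :=
    card_pos.2 ⟨(A₀, B₀, A₀), by simp [S', hA₀, hA₀S, hB₀, hA₀B₀, hA₀s]⟩
  have hstay := hwalk S' (by simp [S', hA₀, hA₀S])
  have hstart := hwalk (flats F k ℓ) (mem_flats.2 hA₀)
  have hflats : 0 < #(flats F k ℓ) := card_pos.2 ⟨A₀, mem_flats.2 hA₀⟩
  have hflats' : 0 < #(flats F k (ℓ + 1)) := card_pos.2 ⟨B₀, mem_flats.2 hB₀⟩
  have key := card_mul_card_bipartiteWalks_mul_le (· ≤ ·) (filter_subset (· ∈ S) _)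
    (fun A hA => card_flats_above_eq (t' := ℓ + 1) (mem_flats.1 hA) hA₀)
    (fun B hB => card_flats_below_eq (t' := ℓ) (mem_flats.1 hB) hB₀)
  rw [stayProb_eq_card_div, mu_upShadow_eq_card_div S hSsub, mu_eq_card_div]
  refine ⟨by positivity, ?_⟩
  rw [ge_iff_le, div_div_div_eq, div_le_div_iff₀ (by positivity) (by positivity)]
  exact_mod_cast key

/-- For a nonempty set `S` of `ℓ`-flats, `μ(S↑) ≥ μ(S)/(1−Φ(S))`, and
`1 − Φ(S) > 0`. -/
theorem shadow_lower_bound (q : ℕ) (hq : IsPrimePow q)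
    (F : Type) [Field F] [Fintype F] (hF : Fintype.card F = q)
    (k ℓ : ℕ) (hlk : ℓ < k)
    (S : Set (AffineSubspace F (Fin k → F)))
    (hSsub : ∀ A ∈ S, IsFlat F ℓ A) (hSne : S.Nonempty) :
    0 < stayProb F k ℓ S ∧
      mu F k (ℓ + 1) (upShadow F k ℓ S) ≥ mu F k ℓ S / stayProb F k ℓ S :=
  shadow_lower_bound_general F k ℓ hlk S hSsub hSne
end

section
/- Let q=p^r with p prime, let ℓ,k∈ℕ, and let H be the Markov averaging operator of the Cayley graph on (F_q^k)^{ℓ+1}: (HG)(v) is the expectation of G(u) over a random step u from v. Let α=(α_0,α_1,…,α_ℓ)∈(F_q^k)^{ℓ+1} and let d = dim span(α_0,α_1,…,α_ℓ) ⊆ F_q^k. Then χ_α is an eigenfunction of H with eigenvalue q^{−d}, i.e., Hχ_α = q^{−d}·χ_α. -/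
open scoped Classical

/-- Vertices of the Cayley graph: tuples `(s, x₁, …, x_ℓ)` of vectors in `F^k`. -/
abbrev CayleyVertex (F : Type) (k ℓ : ℕ) : Type := (Fin k → F) × (Fin ℓ → (Fin k → F))

/-- One step of the Cayley graph walk, with randomness `y, b₀, b`. -/
def cayleyStep (F : Type) [Field F] {k ℓ : ℕ} (v : CayleyVertex F k ℓ)
    (y : Fin k → F) (b₀ : F) (b : Fin ℓ → F) : CayleyVertex F k ℓ :=
  (v.1 + b₀ • y, fun i => v.2 i + b i • y)

/-- The affine subspace `s + span(x₁,…,x_ℓ)` represented by a Cayley vertex. -/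
def flatOf (F : Type) [Field F] {k ℓ : ℕ} (v : CayleyVertex F k ℓ) :
    AffineSubspace F (Fin k → F) :=
  AffineSubspace.mk' v.1 (Submodule.span F (Set.range v.2))

/-- The set `S⋆` in the Cayley graph associated with a set `S` of `ℓ`-flats. -/
def starSet (F : Type) [Field F] {k : ℕ} (ℓ : ℕ) (S : Set (AffineSubspace F (Fin k → F))) :
    Set (CayleyVertex F k ℓ) :=
  {v | Module.finrank F (Submodule.span F (Set.range v.2)) = ℓ ∧ flatOf F v ∈ S}

/-- `1 − Φ(T)` for a subset `T` of the Cayley graph: the probability that a uniformly random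
step from a uniform element of `T` stays inside `T`. -/
noncomputable def cayleyStay (F : Type) [Field F] {k ℓ : ℕ} (T : Set (CayleyVertex F k ℓ)) : ℝ :=
  (Nat.card {w : CayleyVertex F k ℓ × (Fin k → F) × F × (Fin ℓ → F) //
      w.1 ∈ T ∧ cayleyStep F w.1 w.2.1 w.2.2.1 w.2.2.2 ∈ T} : ℝ) /
  (Nat.card {w : CayleyVertex F k ℓ × (Fin k → F) × F × (Fin ℓ → F) // w.1 ∈ T} : ℝ)

/-- The character `χ_α` of the Cayley graph, where `q = p^r`. -/
noncomputable def chi (p : ℕ) (F : Type) [Field F] [Fintype F] [Algebra (ZMod p) F]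
    {k ℓ : ℕ} (α v : CayleyVertex F k ℓ) : ℂ :=
  Complex.exp (2 * Real.pi * Complex.I *
    (((Algebra.trace (ZMod p) F
      ((∑ j, α.1 j * v.1 j) + ∑ i, ∑ j, α.2 i j * v.2 i j)).val : ℕ) : ℂ) / (p : ℂ))

/-- The Markov averaging operator of the Cayley graph. -/
noncomputable def cayleyOp (F : Type) [Field F] [Fintype F] {k ℓ : ℕ}
    (G : CayleyVertex F k ℓ → ℂ) (v : CayleyVertex F k ℓ) : ℂ :=
  (∑ y : Fin k → F, ∑ b₀ : F, ∑ b : Fin ℓ → F, G (cayleyStep F v y b₀ b)) /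
    ((Fintype.card F : ℂ) ^ k * (Fintype.card F : ℂ) ^ (ℓ + 1))

/-- Fourier coefficient `F̂(α)`. -/
noncomputable def cFourierCoeff (p : ℕ) (F : Type) [Field F] [Fintype F] [Algebra (ZMod p) F]
    {k ℓ : ℕ} (G : CayleyVertex F k ℓ → ℂ) (α : CayleyVertex F k ℓ) : ℂ :=
  (∑ v : CayleyVertex F k ℓ, G v * (starRingEnd ℂ) (chi p F α v)) /
    (Fintype.card (CayleyVertex F k ℓ) : ℂ)

/-- The index set `Λ` of level-one characters. -/
def levelOneIndices (F : Type) [Field F] (k ℓ : ℕ) : Set (CayleyVertex F k ℓ) :=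
  {α | (Module.finrank F (Submodule.span F (Set.range α.2)) = 1 ∧
        α.1 ∈ Submodule.span F (Set.range α.2)) ∨ (α.2 = 0 ∧ α.1 ≠ 0)}

/-- The level-one part `F₁` of a function on the Cayley graph. -/
noncomputable def levelOnePart (p : ℕ) (F : Type) [Field F] [Fintype F] [Algebra (ZMod p) F]
    (k ℓ : ℕ) (G : CayleyVertex F k ℓ → ℂ) (v : CayleyVertex F k ℓ) : ℂ :=
  ∑ α ∈ Finset.univ.filter (fun α => α ∈ levelOneIndices F k ℓ),
    cFourierCoeff p F G α * chi p F α v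

/-- `μ(S⋆)`. -/
noncomputable def muStar (F : Type) [Field F] [Fintype F] {k : ℕ} (ℓ : ℕ)
    (S : Set (AffineSubspace F (Fin k → F))) : ℝ :=
  (Nat.card {v : CayleyVertex F k ℓ // v ∈ starSet F ℓ S} : ℝ) /
    (Fintype.card (CayleyVertex F k ℓ) : ℝ)

/-!
With `ψ = e(Tr(·)/p)`, a primitive additive character of `F`, one has `χ_α(u) = ψ⟨α, u⟩` for
the coordinatewise pairing. A step `(y, b₀, b)` adds `b₀ (α₀ ⬝ y) + ∑ bᵢ (αᵢ ⬝ y)` to `⟨α, v⟩`,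
so averaging over `b₀, b` gives `χ_α(v)` when `y` is orthogonal to every `αᵢ` and `0` otherwise.
These `y` form the annihilator of `span(α₀, …, α_ℓ)`, a subspace of codimension `d`, hence a
`q^{-d}` fraction of `F^k`.
-/

open Matrix

section CayleyPairing

variable {F : Type} [Field F] {k ℓ : ℕ}

def cayleyPairing (α v : CayleyVertex F k ℓ) : F :=
  α.1 ⬝ᵥ v.1 + ∑ i, α.2 i ⬝ᵥ v.2 i

lemma cayleyPairing_cayleyStep (α v : CayleyVertex F k ℓ) (y : Fin k → F) (b₀ : F)
    (b : Fin ℓ → F) :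
    cayleyPairing α (cayleyStep F v y b₀ b) =
      cayleyPairing α v + (b₀ * (α.1 ⬝ᵥ y) + ∑ i, b i * (α.2 i ⬝ᵥ y)) := by
  simp only [cayleyPairing, cayleyStep, dotProduct_add, dotProduct_smul, smul_eq_mul,
    Finset.sum_add_distrib]
  ring

end CayleyPairing

lemma AddChar.map_finset_sum {A M ι : Type*} [AddCommMonoid A] [CommMonoid M]
    (ψ : AddChar A M) (s : Finset ι) (f : ι → A) :
    ψ (∑ i ∈ s, f i) = ∏ i ∈ s, ψ (f i) := by
  induction s using Finset.cons_induction with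
  | empty => simp
  | cons a s ha ih => rw [Finset.sum_cons, Finset.prod_cons, AddChar.map_add_eq_mul, ih]

section CharacterSums

variable {F : Type} [Field F] [Fintype F] {ψ : AddChar F ℂ}

lemma sum_addChar_cayleyStep (hψ : ψ.IsPrimitive) {k ℓ : ℕ} (α v : CayleyVertex F k ℓ)
    (y : Fin k → F) :
    ∑ b₀ : F, ∑ b : Fin ℓ → F, ψ (cayleyPairing α (cayleyStep F v y b₀ b)) =
      if α.1 ⬝ᵥ y = 0 ∧ ∀ i, α.2 i ⬝ᵥ y = 0 then
        (Fintype.card F : ℂ) ^ (ℓ + 1) * ψ (cayleyPairing α v) else 0 := by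
  have hsum (c : F) : ∑ b : F, ψ (b * c) = if c = 0 then (Fintype.card F : ℂ) else 0 := by
    rw [AddChar.sum_mulShift c hψ]; push_cast; rfl
  simp_rw [cayleyPairing_cayleyStep, AddChar.map_add_eq_mul, AddChar.map_finset_sum,
    ← Finset.mul_sum, ← Finset.sum_mul]
  rw [← Fintype.prod_sum fun i (c : F) => ψ (c * (α.2 i ⬝ᵥ y))]
  simp only [hsum, Finset.prod_ite_zero, Finset.prod_const, Finset.card_univ, Fintype.card_fin]
  by_cases h₀ : α.1 ⬝ᵥ y = 0 <;> simp [h₀, pow_succ, mul_comm]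

end CharacterSums

section DotAnnihilator

variable {F : Type} [Field F] {n : Type} [Fintype n] [DecidableEq n]

def dotAnnihilator (W : Submodule F (n → F)) : Submodule F (n → F) :=
  W.dualAnnihilator.comap (dotProductEquiv F n).toLinearMap

lemma mem_dotAnnihilator {W : Submodule F (n → F)} {y : n → F} :
    y ∈ dotAnnihilator W ↔ ∀ w ∈ W, w ⬝ᵥ y = 0 := by
  simp [dotAnnihilator, Submodule.mem_dualAnnihilator, dotProduct_comm y]

lemma mem_dotAnnihilator_span {s : Set (n → F)} {y : n → F} :
    y ∈ dotAnnihilator (Submodule.span F s) ↔ ∀ w ∈ s, w ⬝ᵥ y = 0 := by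
  refine mem_dotAnnihilator.trans ⟨fun h w hw => h w (Submodule.subset_span hw), fun h w hw => ?_⟩
  induction hw using Submodule.span_induction with
  | mem w hw => exact h w hw
  | zero => exact zero_dotProduct y
  | add u w _ _ hu hw => rw [add_dotProduct, hu, hw, add_zero]
  | smul c w _ hw => rw [smul_dotProduct, hw, smul_zero]

lemma finrank_add_finrank_dotAnnihilator (W : Submodule F (n → F)) :
    Module.finrank F W + Module.finrank F (dotAnnihilator W) = Fintype.card n := by
  rw [dotAnnihilator, Submodule.comap_equiv_eq_map_symm, LinearEquiv.finrank_map_eq,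
    Subspace.finrank_add_finrank_dualAnnihilator_eq, Module.finrank_fintype_fun_eq_card]

end DotAnnihilator

theorem cayleyOp_addChar_comp_cayleyPairing {F : Type} [Field F] [Fintype F] {ψ : AddChar F ℂ}
    (hψ : ψ.IsPrimitive) {k ℓ : ℕ} (α v : CayleyVertex F k ℓ) :
    cayleyOp F (ψ ∘ cayleyPairing α) v =
      ((Fintype.card F : ℂ) ^
          Module.finrank F (Submodule.span F (insert α.1 (Set.range α.2))))⁻¹ *
        ψ (cayleyPairing α v) := by
  set W := Submodule.span F (insert α.1 (Set.range α.2))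
  have hW (y : Fin k → F) : (α.1 ⬝ᵥ y = 0 ∧ ∀ i, α.2 i ⬝ᵥ y = 0) ↔ y ∈ dotAnnihilator W := by
    simp [W, mem_dotAnnihilator_span]
  have hcard : (Fintype.card (dotAnnihilator W) : ℂ) * Fintype.card F ^ Module.finrank F W =
      Fintype.card F ^ k := by
    norm_cast
    rw [Module.card_eq_pow_finrank (K := F), ← pow_add, add_comm,
      finrank_add_finrank_dotAnnihilator W, Fintype.card_fin]
  simp only [cayleyOp, Function.comp_apply, sum_addChar_cayleyStep hψ, hW]
  rw [← Finset.sum_filter, Finset.sum_const, ← Fintype.card_subtype, nsmul_eq_mul, ← hcard]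
  field_simp

section TraceCharacter

variable (p : ℕ) [NeZero p] (F : Type) [Field F] [Algebra (ZMod p) F]

noncomputable def traceAddChar : AddChar F ℂ :=
  ZMod.stdAddChar.compAddMonoidHom (Algebra.trace (ZMod p) F).toAddMonoidHom

lemma chi_eq_traceAddChar_comp [Fintype F] {k ℓ : ℕ} (α : CayleyVertex F k ℓ) :
    chi p F α = traceAddChar p F ∘ cayleyPairing α := by
  ext v
  simp [chi, traceAddChar, cayleyPairing, ZMod.stdAddChar_apply, ZMod.toCircle_apply, dotProduct]

lemma isPrimitive_traceAddChar [Fact p.Prime] [Finite F] : (traceAddChar p F).IsPrimitive := by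
  refine AddChar.IsPrimitive.of_ne_one (AddChar.ne_one_iff.mpr ?_)
  obtain ⟨x, hx⟩ := Algebra.trace_surjective (ZMod p) F 1
  refine ⟨x, ?_⟩
  rw [traceAddChar, AddChar.compAddMonoidHom_apply, LinearMap.toAddMonoidHom_coe, hx,
    ← (ZMod.stdAddChar (N := p)).map_zero_eq_one, ZMod.injective_stdAddChar.ne_iff]
  exact one_ne_zero

end TraceCharacter

theorem chi_eigenfunction_general (p r : ℕ) (hp : p.Prime)
    (F : Type) [Field F] [Fintype F] [Algebra (ZMod p) F] (hF : Fintype.card F = p ^ r)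
    (k ℓ : ℕ) (α : CayleyVertex F k ℓ) :
    ∀ v : CayleyVertex F k ℓ,
      cayleyOp F (chi p F α) v =
        (((p : ℂ) ^ r) ^
            (Module.finrank F
              (Submodule.span F (insert α.1 (Set.range α.2)) : Submodule F (Fin k → F))))⁻¹ *
          chi p F α v := by
  intro v
  have : Fact p.Prime := ⟨hp⟩
  have hq : (p : ℂ) ^ r = Fintype.card F := by rw [hF, Nat.cast_pow]
  rw [hq, chi_eq_traceAddChar_comp]
  exact cayleyOp_addChar_comp_cayleyPairing (isPrimitive_traceAddChar p F) α v

/-- Each character `χ_α` is an eigenfunction of the Markov averaging operator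
of the Cayley graph, with eigenvalue `q^{−d}` where `d = dim span(α₀, α₁, …, α_ℓ)`. -/
theorem chi_eigenfunction (p r : ℕ) (hp : p.Prime) (hr : 1 ≤ r)
    (F : Type) [Field F] [Fintype F] [Algebra (ZMod p) F] (hF : Fintype.card F = p ^ r)
    (k ℓ : ℕ) (α : CayleyVertex F k ℓ) :
    ∀ v : CayleyVertex F k ℓ,
      cayleyOp F (chi p F α) v =
        (((p : ℂ) ^ r) ^
            (Module.finrank F
              (Submodule.span F (insert α.1 (Set.range α.2)) : Submodule F (Fin k → F))))⁻¹ *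
          chi p F α v :=
  chi_eigenfunction_general p r hp F hF k ℓ α
end
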